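/- arXiv:1705.08322 — 10 statements merged into one kernel-verified Lean document; each statement's English description precedes it below -/
import Mathlib

section
/- For all natural numbers n, s(n) ≤ 2n. -/
/-!
Strong induction on `n`, writing `n = 2 ^ ℓ + r` with `1 ≤ r ≤ 2 ^ ℓ`. In the first case of the
recursion the bound adds up to `2 ^ ℓ + 4 r ≤ 2 n` exactly because `r ≤ 2 ^ (ℓ - 1)`; in the second
the reflected argument `2 ^ (ℓ + 1) - r + 1` is smaller than `n` because `r > 2 ^ (ℓ - 1)`.
-/

theorem exists_eq_two_pow_add_of_two_le {n : ℕ} (hn : 2 ≤ n) :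
    ∃ ℓ r, 0 < r ∧ r ≤ 2 ^ ℓ ∧ n = 2 ^ ℓ + r := by
  have hlow : 2 ^ Nat.log 2 (n - 1) ≤ n - 1 := Nat.pow_log_le_self 2 (by omega)
  have hhigh : n - 1 < 2 ^ (Nat.log 2 (n - 1) + 1) := Nat.lt_pow_succ_log_self (by norm_num) _
  rw [pow_succ] at hhigh
  exact ⟨Nat.log 2 (n - 1), n - 2 ^ Nat.log 2 (n - 1), by omega, by omega, by omega⟩

theorem s_le_two_mul (s : ℕ → ℕ)
    (hs0 : s 0 = 0) (hs1 : s 1 = 1) (hs2 : s 2 = 2)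
    (hrec1 : ∀ ℓ, 1 ≤ ℓ → ∀ r, 1 ≤ r → r ≤ 2 ^ (ℓ - 1) →
      s (2 ^ ℓ + r) = s (2 ^ (ℓ - 1) + r) + s r)
    (hrec2 : ∀ ℓ, 1 ≤ ℓ → ∀ r, 2 ^ (ℓ - 1) < r → r ≤ 2 ^ ℓ →
      s (2 ^ ℓ + r) = s (2 ^ (ℓ + 1) - r + 1)) :
    ∀ n, s n ≤ 2 * n := by
  intro n
  induction n using Nat.strong_induction_on with
  | _ n ih =>
  rcases (by omega : n = 0 ∨ n = 1 ∨ n = 2 ∨ 3 ≤ n) with rfl | rfl | rfl | hn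
  · omega
  · omega
  · omega
  obtain ⟨ℓ, r, hr, hrℓ, rfl⟩ := exists_eq_two_pow_add_of_two_le (by omega : 2 ≤ n)
  obtain ⟨k, rfl⟩ : ∃ k, ℓ = k + 1 :=
    Nat.exists_eq_add_one.mpr (Nat.pos_of_ne_zero fun h ↦ by subst h; omega)
  have hpow : 2 ^ (k + 1) = 2 * 2 ^ k := pow_succ' 2 k
  have hpow' : 2 ^ (k + 1 + 1) = 4 * 2 ^ k := by rw [pow_succ, hpow]; ring
  rcases le_or_gt r (2 ^ k) with hlow | hhigh
  · calc s (2 ^ (k + 1) + r) = s (2 ^ k + r) + s r := hrec1 (k + 1) (by omega) r hr hlow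
      _ ≤ 2 * (2 ^ k + r) + 2 * r := add_le_add (ih _ (by omega)) (ih _ (by omega))
      _ ≤ 2 * (2 ^ (k + 1) + r) := by omega
  · calc s (2 ^ (k + 1) + r) = s (2 ^ (k + 1 + 1) - r + 1) :=
          hrec2 (k + 1) (by omega) r hhigh hrℓ
      _ ≤ 2 * (2 ^ (k + 1 + 1) - r + 1) := ih _ (by omega)
      _ ≤ 2 * (2 ^ (k + 1) + r) := by omega
end

section
/- For all n ≥ 0, A(2^n) = 3^n, where A(N) = Σ_{j=0}^{N} s(j). -/
/-!
Write `S n = s 1 + ⋯ + s (2^n)` and `T n = s (2^n + 1) + ⋯ + s (2^(n+1))`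
(`blockSum s 0 (2^n)` and `blockSum s (2^n) (2^n)` below), so that `A (2^n) = S n` and
`S (n+1) = S n + T n`. On the first half of the block `(2^(n+1), 2^(n+2)]` the first recurrence
gives `s (2^(n+1) + r) = s (2^n + r) + s r`, so that half sums to `T n + S n`; the second
recurrence reflects the second half onto the first. Hence `T (n+1) = 2 (S n + T n)`, and
`S n = 3^n`, `T n = 2 * 3^n` follow by induction.
-/

open Finset

def blockSum (s : ℕ → ℕ) (a m : ℕ) : ℕ := ∑ r ∈ range m, s (a + r + 1)

theorem blockSum_add (s : ℕ → ℕ) (a m k : ℕ) :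
    blockSum s a (m + k) = blockSum s a m + blockSum s (a + m) k := by
  simp only [blockSum, sum_range_add, add_assoc]

section Recurrence

variable {s : ℕ → ℕ}

theorem blockSum_lower_half
    (hrec1 : ∀ ℓ, 1 ≤ ℓ → ∀ r, 1 ≤ r → r ≤ 2 ^ (ℓ - 1) →
      s (2 ^ ℓ + r) = s (2 ^ (ℓ - 1) + r) + s r) (n : ℕ) :
    blockSum s (2 ^ (n + 1)) (2 ^ n) = blockSum s (2 ^ n) (2 ^ n) + blockSum s 0 (2 ^ n) := by
  rw [blockSum, blockSum, blockSum, ← sum_add_distrib]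
  refine sum_congr rfl fun r hr => ?_
  have := hrec1 (n + 1) le_add_self (r + 1) le_add_self (by simpa using hr)
  simpa only [add_assoc, zero_add, add_tsub_cancel_right] using this

theorem blockSum_upper_half
    (hrec2 : ∀ ℓ, 1 ≤ ℓ → ∀ r, 2 ^ (ℓ - 1) < r → r ≤ 2 ^ ℓ →
      s (2 ^ ℓ + r) = s (2 ^ (ℓ + 1) - r + 1)) (n : ℕ) :
    blockSum s (2 ^ (n + 1) + 2 ^ n) (2 ^ n) = blockSum s (2 ^ (n + 1)) (2 ^ n) := by
  rw [blockSum, blockSum, eq_comm, ← sum_range_reflect]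
  refine sum_congr rfl fun r hr => ?_
  rw [mem_range] at hr
  have hpow : 2 ^ (n + 1) = 2 ^ n + 2 ^ n := Nat.two_pow_succ n
  have := hrec2 (n + 1) le_add_self (2 ^ n + r + 1) (by simp) (by omega)
  rw [show 2 ^ (n + 1) + 2 ^ n + r + 1 = 2 ^ (n + 1) + (2 ^ n + r + 1) by ring, this,
    pow_succ 2 (n + 1), hpow]
  congr 1
  omega

theorem blockSum_pow_two (hs1 : s 1 = 1) (hs2 : s 2 = 2)
    (hrec1 : ∀ ℓ, 1 ≤ ℓ → ∀ r, 1 ≤ r → r ≤ 2 ^ (ℓ - 1) →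
      s (2 ^ ℓ + r) = s (2 ^ (ℓ - 1) + r) + s r)
    (hrec2 : ∀ ℓ, 1 ≤ ℓ → ∀ r, 2 ^ (ℓ - 1) < r → r ≤ 2 ^ ℓ →
      s (2 ^ ℓ + r) = s (2 ^ (ℓ + 1) - r + 1)) (n : ℕ) :
    blockSum s 0 (2 ^ n) = 3 ^ n ∧ blockSum s (2 ^ n) (2 ^ n) = 2 * 3 ^ n := by
  induction n with
  | zero => exact ⟨hs1, hs2⟩
  | succ n ih =>
    obtain ⟨hS, hT⟩ := ih
    have hpow : 2 ^ (n + 1) = 2 ^ n + 2 ^ n := Nat.two_pow_succ n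
    constructor
    · rw [hpow, blockSum_add, zero_add, hS, hT]
      ring
    · rw [hpow, blockSum_add, ← hpow, blockSum_upper_half hrec2, blockSum_lower_half hrec1,
        hS, hT]
      ring

end Recurrence

theorem A_pow_two (s : ℕ → ℕ)
    (hs0 : s 0 = 0) (hs1 : s 1 = 1) (hs2 : s 2 = 2)
    (hrec1 : ∀ ℓ, 1 ≤ ℓ → ∀ r, 1 ≤ r → r ≤ 2 ^ (ℓ - 1) →
      s (2 ^ ℓ + r) = s (2 ^ (ℓ - 1) + r) + s r)
    (hrec2 : ∀ ℓ, 1 ≤ ℓ → ∀ r, 2 ^ (ℓ - 1) < r → r ≤ 2 ^ ℓ →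
      s (2 ^ ℓ + r) = s (2 ^ (ℓ + 1) - r + 1))
    (A : ℕ → ℕ) (hA : ∀ N, A N = ∑ j ∈ Finset.range (N + 1), s j) :
    ∀ n, A (2 ^ n) = 3 ^ n := by
  intro n
  rw [hA, sum_range_succ', hs0, add_zero]
  simpa only [blockSum, zero_add] using (blockSum_pow_two hs1 hs2 hrec1 hrec2 n).1
end

section
/- For all ℓ ≥ 1 and all r with 0 ≤ r ≤ 2^{ℓ-1}, A(2^ℓ + r) = 2·3^{ℓ-1} + A(2^{ℓ-1} + r) + A(r). -/
/-! Summing the first recursion over `1 ≤ j ≤ r` splits the block `A (2^ℓ + r) - A (2^ℓ)` into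
`A (2^(ℓ-1) + r) - A (2^(ℓ-1))` plus `A r`, and `A (2^ℓ) - A (2^(ℓ-1)) = 3^ℓ - 3^(ℓ-1) = 2 * 3^(ℓ-1)`. -/

open Finset

/-- `S (a + r) - S a = (S (b + r) - S b) + (S r - S 0)` for the prefix sums `S`, with the
subtracted terms moved across so that it holds in any additive commutative monoid. -/
theorem sum_range_add_add_sum_range_eq_of_add_eq {M : Type*} [AddCommMonoid M] (f : ℕ → M)
    (a b r : ℕ) (h : ∀ j < r, f (a + j + 1) = f (b + j + 1) + f (j + 1)) :
    ∑ j ∈ range (a + r + 1), f j + ∑ j ∈ range (b + 1), f j + f 0 =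
      ∑ j ∈ range (a + 1), f j + ∑ j ∈ range (b + r + 1), f j + ∑ j ∈ range (r + 1), f j := by
  induction r with
  | zero => simp only [add_zero, zero_add, sum_range_one]
  | succ r ih =>
    calc ∑ j ∈ range (a + r + 1 + 1), f j + ∑ j ∈ range (b + 1), f j + f 0
        = (∑ j ∈ range (a + r + 1), f j + ∑ j ∈ range (b + 1), f j + f 0) + f (a + r + 1) := by
          rw [sum_range_succ]; abel
      _ = (∑ j ∈ range (a + 1), f j + ∑ j ∈ range (b + r + 1), f j + ∑ j ∈ range (r + 1), f j) +
          (f (b + r + 1) + f (r + 1)) := by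
          rw [ih fun j hj => h j (by omega), h r (by omega)]
      _ = ∑ j ∈ range (a + 1), f j + ∑ j ∈ range (b + r + 1 + 1), f j +
          ∑ j ∈ range (r + 1 + 1), f j := by
          simp only [sum_range_succ _ (b + r + 1), sum_range_succ _ (r + 1)]; abel

theorem A_rec_first_general (s : ℕ → ℕ)
    (hs0 : s 0 = 0)
    (hrec1 : ∀ ℓ, 1 ≤ ℓ → ∀ r, 1 ≤ r → r ≤ 2 ^ (ℓ - 1) →
      s (2 ^ ℓ + r) = s (2 ^ (ℓ - 1) + r) + s r)
    (A : ℕ → ℕ) (hA : ∀ N, A N = ∑ j ∈ Finset.range (N + 1), s j)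
    (hApow : ∀ n, A (2 ^ n) = 3 ^ n) :
    ∀ ℓ, 1 ≤ ℓ → ∀ r, r ≤ 2 ^ (ℓ - 1) →
      A (2 ^ ℓ + r) = 2 * 3 ^ (ℓ - 1) + A (2 ^ (ℓ - 1) + r) + A r := by
  intro ℓ hℓ r hr
  have hblocks := sum_range_add_add_sum_range_eq_of_add_eq s (2 ^ ℓ) (2 ^ (ℓ - 1)) r
    fun j hj => hrec1 ℓ hℓ (j + 1) (by omega) (by omega)
  simp only [← hA, hApow, hs0, add_zero] at hblocks
  have hpow : 3 ^ ℓ = 3 * 3 ^ (ℓ - 1) := by rw [← pow_succ', Nat.sub_add_cancel hℓ]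
  omega

theorem A_rec_first (s : ℕ → ℕ)
    (hs0 : s 0 = 0) (hs1 : s 1 = 1) (hs2 : s 2 = 2)
    (hrec1 : ∀ ℓ, 1 ≤ ℓ → ∀ r, 1 ≤ r → r ≤ 2 ^ (ℓ - 1) →
      s (2 ^ ℓ + r) = s (2 ^ (ℓ - 1) + r) + s r)
    (hrec2 : ∀ ℓ, 1 ≤ ℓ → ∀ r, 2 ^ (ℓ - 1) < r → r ≤ 2 ^ ℓ →
      s (2 ^ ℓ + r) = s (2 ^ (ℓ + 1) - r + 1))
    (A : ℕ → ℕ) (hA : ∀ N, A N = ∑ j ∈ Finset.range (N + 1), s j)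
    (hApow : ∀ n, A (2 ^ n) = 3 ^ n) :
    ∀ ℓ, 1 ≤ ℓ → ∀ r, r ≤ 2 ^ (ℓ - 1) →
      A (2 ^ ℓ + r) = 2 * 3 ^ (ℓ - 1) + A (2 ^ (ℓ - 1) + r) + A r :=
  A_rec_first_general s hs0 hrec1 A hA hApow
end

section
/- For all ℓ ≥ 1 and all r with 2^{ℓ-1} < r < 2^ℓ, setting r' = 2^ℓ - r, we have A(2^ℓ + r) = 4·3^ℓ - 2·3^{ℓ-1} - A(2^{ℓ-1} + r') - A(r'). -/
/-!
Write `P N = ∑_{j ≤ N} s j`. Cut the block `(2^ℓ, 2^(ℓ+1)]` after `2^ℓ + r`: by the mirror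
rule the `r' = 2^ℓ - r` terms after the cut sum to the first `r'` terms of the block, and by the
halving rule these split into `P(2^(ℓ-1) + r') - P(2^(ℓ-1))` and `P(r')`. Hence
`P(2^ℓ + r) + P(2^(ℓ-1) + r') + P(r') = P(2^(ℓ+1)) + P(2^(ℓ-1))`, and the same two rules show
that the block `(2^k, 2^(k+1)]` sums to `2 P(2^k)`, so `P(2^k) = 3^k`.
-/

open Finset

section

variable {s : ℕ → ℕ}

lemma sum_range_add_add_one (N n : ℕ) :
    ∑ j ∈ range (N + n + 1), s j = ∑ j ∈ range (N + 1), s j + ∑ i ∈ range n, s (N + 1 + i) := by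
  rw [← sum_range_add, Nat.add_right_comm]

lemma sum_range_add_one_of_map_zero (hs0 : s 0 = 0) (n : ℕ) :
    ∑ j ∈ range (n + 1), s j = ∑ i ∈ range n, s (1 + i) := by
  simpa [hs0] using sum_range_add_add_one (s := s) 0 n

lemma sum_block_start_of_half_rec {m : ℕ}
    (hhalf : ∀ r, 1 ≤ r → r ≤ 2 ^ m → s (2 ^ (m + 1) + r) = s (2 ^ m + r) + s r)
    {n : ℕ} (hn : n ≤ 2 ^ m) :
    ∑ i ∈ range n, s (2 ^ (m + 1) + 1 + i) =
      ∑ i ∈ range n, s (2 ^ m + 1 + i) + ∑ i ∈ range n, s (1 + i) := by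
  rw [← sum_add_distrib]
  refine sum_congr rfl fun i hi => ?_
  rw [mem_range] at hi
  simpa only [add_assoc] using hhalf (1 + i) (by omega) (by omega)

lemma sum_block_end_of_mirror_rec {m : ℕ}
    (hmirror : ∀ r, 2 ^ m < r → r ≤ 2 ^ (m + 1) →
      s (2 ^ (m + 1) + r) = s (2 ^ (m + 2) - r + 1))
    {r : ℕ} (hr : 2 ^ m ≤ r) (hr' : r ≤ 2 ^ (m + 1)) :
    ∑ i ∈ range (2 ^ (m + 1) - r), s (2 ^ (m + 1) + r + 1 + i) =
      ∑ i ∈ range (2 ^ (m + 1) - r), s (2 ^ (m + 1) + 1 + i) := by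
  rw [← sum_range_reflect]
  refine sum_congr rfl fun i hi => ?_
  rw [mem_range] at hi
  have hpow : 2 ^ (m + 2) = 2 * 2 ^ (m + 1) := by ring
  rw [add_assoc _ 1, add_assoc _ r, hmirror _ (by omega) (by omega)]
  congr 1
  omega

lemma sum_block_eq_two_mul_sum_range (hs0 : s 0 = 0) {m : ℕ}
    (hhalf : ∀ r, 1 ≤ r → r ≤ 2 ^ m → s (2 ^ (m + 1) + r) = s (2 ^ m + r) + s r)
    (hmirror : ∀ r, 2 ^ m < r → r ≤ 2 ^ (m + 1) →
      s (2 ^ (m + 1) + r) = s (2 ^ (m + 2) - r + 1)) :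
    ∑ i ∈ range (2 ^ (m + 1)), s (2 ^ (m + 1) + 1 + i) =
      2 * ∑ j ∈ range (2 ^ (m + 1) + 1), s j := by
  have hpow : 2 ^ (m + 1) = 2 ^ m + 2 ^ m := by ring
  have hsecond := sum_block_end_of_mirror_rec hmirror le_rfl (hpow ▸ Nat.le_add_right _ _)
  rw [show 2 ^ (m + 1) - 2 ^ m = 2 ^ m by rw [hpow, Nat.add_sub_cancel]] at hsecond
  have hsplit := sum_range_add (fun i => s (2 ^ (m + 1) + 1 + i)) (2 ^ m) (2 ^ m)
  simp only [← hpow, ← add_assoc, add_right_comm _ 1 (2 ^ m), hsecond] at hsplit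
  rw [hsplit, sum_block_start_of_half_rec hhalf le_rfl, ← sum_range_add_one_of_map_zero hs0,
    hpow, sum_range_add_add_one]
  ring

lemma sum_range_two_pow_add_one (hs0 : s 0 = 0) (hs1 : s 1 = 1) (hs2 : s 2 = 2)
    (hhalf : ∀ m r, 1 ≤ r → r ≤ 2 ^ m → s (2 ^ (m + 1) + r) = s (2 ^ m + r) + s r)
    (hmirror : ∀ m r, 2 ^ m < r → r ≤ 2 ^ (m + 1) →
      s (2 ^ (m + 1) + r) = s (2 ^ (m + 2) - r + 1)) (m : ℕ) :
    ∑ j ∈ range (2 ^ m + 1), s j = 3 ^ m := by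
  induction m with
  | zero => simp [sum_range_succ, hs0, hs1]
  | succ m ih =>
    have hblock : ∑ i ∈ range (2 ^ m), s (2 ^ m + 1 + i) = 2 * ∑ j ∈ range (2 ^ m + 1), s j := by
      cases m with
      | zero => simp [sum_range_succ, hs0, hs1, hs2]
      | succ k => exact sum_block_eq_two_mul_sum_range hs0 (hhalf k) (hmirror k)
    rw [pow_succ 2, mul_two, sum_range_add_add_one, hblock, ih]
    ring

lemma sum_range_cut_block (hs0 : s 0 = 0) {m : ℕ}
    (hhalf : ∀ r, 1 ≤ r → r ≤ 2 ^ m → s (2 ^ (m + 1) + r) = s (2 ^ m + r) + s r)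
    (hmirror : ∀ r, 2 ^ m < r → r ≤ 2 ^ (m + 1) →
      s (2 ^ (m + 1) + r) = s (2 ^ (m + 2) - r + 1))
    {r : ℕ} (hr : 2 ^ m ≤ r) (hr' : r ≤ 2 ^ (m + 1)) :
    ∑ j ∈ range (2 ^ (m + 1) + r + 1), s j +
        ∑ j ∈ range (2 ^ m + (2 ^ (m + 1) - r) + 1), s j +
        ∑ j ∈ range (2 ^ (m + 1) - r + 1), s j =
      ∑ j ∈ range (2 ^ (m + 2) + 1), s j + ∑ j ∈ range (2 ^ m + 1), s j := by
  have hpow : 2 ^ (m + 2) = 2 ^ (m + 1) + r + (2 ^ (m + 1) - r) := by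
    rw [pow_succ 2 (m + 1)]; omega
  rw [hpow, sum_range_add_add_one (2 ^ (m + 1) + r), sum_block_end_of_mirror_rec hmirror hr hr',
    sum_block_start_of_half_rec hhalf (by omega), sum_range_add_add_one (2 ^ m),
    sum_range_add_one_of_map_zero hs0 (2 ^ (m + 1) - r)]
  ring

end

theorem A_rec_second (s : ℕ → ℕ)
    (hs0 : s 0 = 0) (hs1 : s 1 = 1) (hs2 : s 2 = 2)
    (hrec1 : ∀ ℓ, 1 ≤ ℓ → ∀ r, 1 ≤ r → r ≤ 2 ^ (ℓ - 1) →
      s (2 ^ ℓ + r) = s (2 ^ (ℓ - 1) + r) + s r)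
    (hrec2 : ∀ ℓ, 1 ≤ ℓ → ∀ r, 2 ^ (ℓ - 1) < r → r ≤ 2 ^ ℓ →
      s (2 ^ ℓ + r) = s (2 ^ (ℓ + 1) - r + 1))
    (A : ℕ → ℕ) (hA : ∀ N, A N = ∑ j ∈ Finset.range (N + 1), s j) :
    ∀ ℓ, 1 ≤ ℓ → ∀ r, 2 ^ (ℓ - 1) < r → r < 2 ^ ℓ →
      (A (2 ^ ℓ + r) : ℤ) =
        4 * 3 ^ ℓ - 2 * 3 ^ (ℓ - 1) - A (2 ^ (ℓ - 1) + (2 ^ ℓ - r)) - A (2 ^ ℓ - r) := by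
  intro ℓ hℓ r hr hr'
  obtain ⟨m, rfl⟩ : ∃ m, ℓ = m + 1 := ⟨ℓ - 1, by omega⟩
  have hhalf : ∀ k r, 1 ≤ r → r ≤ 2 ^ k → s (2 ^ (k + 1) + r) = s (2 ^ k + r) + s r :=
    fun k => hrec1 (k + 1) (by omega)
  have hmirror : ∀ k r, 2 ^ k < r → r ≤ 2 ^ (k + 1) →
      s (2 ^ (k + 1) + r) = s (2 ^ (k + 2) - r + 1) :=
    fun k => hrec2 (k + 1) (by omega)
  rw [Nat.add_sub_cancel] at hr ⊢
  have key := sum_range_cut_block hs0 (hhalf m) (hmirror m) hr.le hr'.le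
  simp only [sum_range_two_pow_add_one hs0 hs1 hs2 hhalf hmirror, ← hA] at key
  zify at key
  linear_combination key
end

section
/- For all natural numbers n, A(2n) = 3·A(n). -/
/-!
Everything rests on the pair identity `s (2m - 1) + s (2m) = 3 s m` for `m ≥ 1`: summing it over
`1 ≤ m ≤ n` and using `s 0 = 0` gives `A (2n) = 3 A n`. The identity holds for `m ≤ 2` because
`s 2 = 2 s 1`. For larger `m` write `m = 2^ℓ + r` with `0 < r ≤ 2^ℓ`: then `2m - 1` and `2m` are
`2^(ℓ+1) + (2r - 1)` and `2^(ℓ+1) + 2r`, whose offsets lie in the same half of the next dyadic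
block as `r` does in its own. In the lower half the additive recursion splits the pair at `m`
into the pairs at `2^(ℓ-1) + r` and at `r`; in the upper half the reflection maps it onto the
pair at `2^(ℓ+1) - r + 1 < m`, with its two entries swapped. Strong induction concludes.
-/

open Finset

theorem Finset.sum_range_two_mul_add_one_eq_mul {R : Type*} [Semiring R] (f : ℕ → R) (c : R)
    (h0 : f 0 = 0) (hpair : ∀ n, f (2 * n + 1) + f (2 * n + 2) = c * f (n + 1)) (n : ℕ) :
    ∑ j ∈ range (2 * n + 1), f j = c * ∑ j ∈ range (n + 1), f j := by
  induction n with
  | zero => simp [h0]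
  | succ n ih =>
    rw [show 2 * (n + 1) + 1 = 2 * n + 1 + 1 + 1 by ring, sum_range_succ, sum_range_succ, ih,
      add_assoc, hpair, sum_range_succ _ (n + 1), mul_add]

theorem exists_eq_two_pow_add {m : ℕ} (hm : 2 ≤ m) :
    ∃ k r, 0 < r ∧ r ≤ 2 ^ k ∧ m = 2 ^ k + r := by
  have hle : 2 ^ Nat.log 2 (m - 1) ≤ m - 1 := Nat.pow_log_le_self 2 (by omega)
  have hlt : m - 1 < 2 ^ (Nat.log 2 (m - 1) + 1) := Nat.lt_pow_succ_log_self (by norm_num) _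
  exact ⟨Nat.log 2 (m - 1), m - 2 ^ Nat.log 2 (m - 1), by omega, by omega, by omega⟩

section

variable {s : ℕ → ℕ}

theorem pair_sum_two_pow_add_of_le
    (hadd : ∀ k r, 0 < r → r ≤ 2 ^ k → s (2 ^ (k + 1) + r) = s (2 ^ k + r) + s r)
    {k r : ℕ} (hr : 0 < r) (hrk : r ≤ 2 ^ k)
    (hhigh : s (2 * (2 ^ k + r) - 1) + s (2 * (2 ^ k + r)) = 3 * s (2 ^ k + r))
    (hlow : s (2 * r - 1) + s (2 * r) = 3 * s r) :
    s (2 * (2 ^ (k + 1) + r) - 1) + s (2 * (2 ^ (k + 1) + r)) = 3 * s (2 ^ (k + 1) + r) := by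
  have hodd : s (2 * (2 ^ (k + 1) + r) - 1) = s (2 * (2 ^ k + r) - 1) + s (2 * r - 1) := by
    convert hadd (k + 1) (2 * r - 1) (by omega) (by omega) using 3 <;> omega
  have heven : s (2 * (2 ^ (k + 1) + r)) = s (2 * (2 ^ k + r)) + s (2 * r) := by
    convert hadd (k + 1) (2 * r) (by omega) (by omega) using 3 <;> omega
  rw [hodd, heven, hadd k r hr hrk]
  omega

theorem pair_sum_two_pow_add_of_lt
    (hrefl : ∀ k r, 2 ^ k < r → r ≤ 2 ^ (k + 1) → s (2 ^ (k + 1) + r) = s (2 ^ (k + 2) - r + 1))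
    {k r : ℕ} (hkr : 2 ^ k < r) (hrk : r ≤ 2 ^ (k + 1))
    (hmirror : s (2 * (2 ^ (k + 2) - r + 1) - 1) + s (2 * (2 ^ (k + 2) - r + 1)) =
      3 * s (2 ^ (k + 2) - r + 1)) :
    s (2 * (2 ^ (k + 1) + r) - 1) + s (2 * (2 ^ (k + 1) + r)) = 3 * s (2 ^ (k + 1) + r) := by
  have hpow : 2 ^ (k + 2) = 4 * 2 ^ k := by ring
  have hpow' : 2 ^ (k + 1 + 2) = 8 * 2 ^ k := by ring
  have hodd : s (2 * (2 ^ (k + 1) + r) - 1) = s (2 * (2 ^ (k + 2) - r + 1)) := by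
    convert hrefl (k + 1) (2 * r - 1) (by omega) (by omega) using 2 <;> omega
  have heven : s (2 * (2 ^ (k + 1) + r)) = s (2 * (2 ^ (k + 2) - r + 1) - 1) := by
    convert hrefl (k + 1) (2 * r) (by omega) (by omega) using 2 <;> omega
  rw [hodd, heven, hrefl k r hkr hrk]
  omega

theorem pair_sum_eq_three_mul (h21 : s 2 = 2 * s 1)
    (hadd : ∀ k r, 0 < r → r ≤ 2 ^ k → s (2 ^ (k + 1) + r) = s (2 ^ k + r) + s r)
    (hrefl : ∀ k r, 2 ^ k < r → r ≤ 2 ^ (k + 1) → s (2 ^ (k + 1) + r) = s (2 ^ (k + 2) - r + 1))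
    {m : ℕ} (hm : 0 < m) : s (2 * m - 1) + s (2 * m) = 3 * s m := by
  induction m using Nat.strong_induction_on with
  | _ m ih =>
  obtain rfl | rfl | hm3 : m = 1 ∨ m = 2 ∨ 3 ≤ m := by omega
  · show s 1 + s 2 = 3 * s 1
    omega
  · have h3 : s 3 = s 2 + s 1 := hadd 0 1 one_pos le_rfl
    have h4 : s 4 = s 3 := hrefl 0 2 (by norm_num) le_rfl
    show s 3 + s 4 = 3 * s 2
    omega
  obtain ⟨k, r, hr, hrk, rfl⟩ := exists_eq_two_pow_add (m := m) (by omega)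
  rcases k with _ | k
  · omega
  by_cases hle : r ≤ 2 ^ k
  · exact pair_sum_two_pow_add_of_le hadd hr hle (ih _ (by omega) (by positivity))
      (ih r (by omega) hr)
  · have hpow : 2 ^ (k + 2) = 4 * 2 ^ k := by ring
    exact pair_sum_two_pow_add_of_lt hrefl (by omega) hrk (ih _ (by omega) (by omega))

end

theorem A_two_mul (s : ℕ → ℕ)
    (hs0 : s 0 = 0) (hs1 : s 1 = 1) (hs2 : s 2 = 2)
    (hrec1 : ∀ ℓ, 1 ≤ ℓ → ∀ r, 1 ≤ r → r ≤ 2 ^ (ℓ - 1) →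
      s (2 ^ ℓ + r) = s (2 ^ (ℓ - 1) + r) + s r)
    (hrec2 : ∀ ℓ, 1 ≤ ℓ → ∀ r, 2 ^ (ℓ - 1) < r → r ≤ 2 ^ ℓ →
      s (2 ^ ℓ + r) = s (2 ^ (ℓ + 1) - r + 1))
    (A : ℕ → ℕ) (hA : ∀ N, A N = ∑ j ∈ Finset.range (N + 1), s j) :
    ∀ n, A (2 * n) = 3 * A n := by
  have hadd : ∀ k r, 0 < r → r ≤ 2 ^ k → s (2 ^ (k + 1) + r) = s (2 ^ k + r) + s r :=
    fun k r hr hrk => hrec1 (k + 1) k.succ_pos r hr hrk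
  have hrefl : ∀ k r, 2 ^ k < r → r ≤ 2 ^ (k + 1) →
      s (2 ^ (k + 1) + r) = s (2 ^ (k + 2) - r + 1) :=
    fun k r hkr hrk => hrec2 (k + 1) k.succ_pos r hkr hrk
  have hpair (n : ℕ) : s (2 * n + 1) + s (2 * n + 2) = 3 * s (n + 1) := by
    simpa [Nat.mul_succ] using pair_sum_eq_three_mul (by rw [hs1, hs2]) hadd hrefl n.succ_pos
  intro n
  rw [hA, hA]
  exact sum_range_two_mul_add_one_eq_mul s 3 hs0 hpair n
end

section
/- For all ℓ ≥ 1 and all 0 ≤ r < F(ℓ-1), s_F(F(ℓ)+r) ≤ 2^{ℓ+1}. -/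
/-!
Strengthen the claim to `s_F n ≤ 2 ^ ℓ` for every `n < F ℓ` and induct on `ℓ`. An index in
`[F (ℓ+1), F (ℓ+2))` has the form `F (ℓ+1) + r` with `r < F ℓ`. In the first recursive case
`F ℓ + r < F (ℓ+1)`, so both summands are bounded by `2 ^ (ℓ+1)`; in the second case
`2 * s_F r ≤ 2 ^ (ℓ+1)`. The theorem is the case `n = F ℓ + r < F (ℓ+1)`.
-/

section

variable {F sF : ℕ → ℕ}

theorem add_sub_one_le_succ (hF0 : F 0 = 1) (hF1 : F 1 = 2)
    (hF : ∀ n, F (n + 2) = F (n + 1) + F n) (ℓ : ℕ) :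
    F ℓ + F (ℓ - 1) ≤ F (ℓ + 1) := by
  cases ℓ with
  | zero => simp [hF0, hF1]
  | succ n => simp [hF n]

theorem sF_add_le_two_pow (hF0 : F 0 = 1) (hF1 : F 1 = 2)
    (hF : ∀ n, F (n + 2) = F (n + 1) + F n)
    (hrec1 : ∀ ℓ, 1 ≤ ℓ → ∀ r, r < F (ℓ - 2) →
      sF (F ℓ + r) = sF (F (ℓ - 1) + r) + sF r)
    (hrec2 : ∀ ℓ, 1 ≤ ℓ → ∀ r, F (ℓ - 2) ≤ r → r < F (ℓ - 1) →
      sF (F ℓ + r) = 2 * sF r)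
    {k r : ℕ} (hr : r < F k)
    (ih_succ : ∀ n < F (k + 1), sF n ≤ 2 ^ (k + 1)) (ih : ∀ n < F k, sF n ≤ 2 ^ k) :
    sF (F (k + 1) + r) ≤ 2 ^ (k + 2) := by
  have hsub : k + 1 - 2 = k - 1 := by omega
  have hr_bound : sF r ≤ 2 ^ k := ih r hr
  rcases lt_or_ge r (F (k - 1)) with hsmall | hlarge
  · rw [hrec1 (k + 1) le_add_self r (hsub ▸ hsmall), Nat.add_sub_cancel]
    have hshift : sF (F k + r) ≤ 2 ^ (k + 1) :=
      ih_succ _ (by have := add_sub_one_le_succ hF0 hF1 hF k; omega)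
    rw [pow_succ, pow_succ] at *
    omega
  · rw [hrec2 (k + 1) le_add_self r (hsub ▸ hlarge) hr, pow_succ, pow_succ]
    omega

theorem sF_le_two_pow_of_lt (hF0 : F 0 = 1) (hF1 : F 1 = 2)
    (hF : ∀ n, F (n + 2) = F (n + 1) + F n) (hsF0 : sF 0 = 1) (hsF1 : sF 1 = 2)
    (hrec1 : ∀ ℓ, 1 ≤ ℓ → ∀ r, r < F (ℓ - 2) →
      sF (F ℓ + r) = sF (F (ℓ - 1) + r) + sF r)
    (hrec2 : ∀ ℓ, 1 ≤ ℓ → ∀ r, F (ℓ - 2) ≤ r → r < F (ℓ - 1) →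
      sF (F ℓ + r) = 2 * sF r) :
    ∀ ℓ, ∀ n < F ℓ, sF n ≤ 2 ^ ℓ := by
  intro ℓ
  induction ℓ using Nat.strong_induction_on with
  | _ ℓ ih =>
    intro n hn
    rcases ℓ with _ | _ | k
    · rw [hF0] at hn
      interval_cases n
      simp [hsF0]
    · rw [hF1] at hn
      interval_cases n <;> simp [hsF0, hsF1]
    · rcases lt_or_ge n (F (k + 1)) with hlow | hhigh
      · exact (ih (k + 1) (by omega) n hlow).trans (Nat.pow_le_pow_right two_pos (by omega))
      · obtain ⟨r, rfl⟩ := Nat.exists_eq_add_of_le hhigh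
        have hr : r < F k := by have : F (k + 1 + 1) = F (k + 1) + F k := hF k; omega
        exact sF_add_le_two_pow hF0 hF1 hF hrec1 hrec2 hr (ih (k + 1) (by omega)) (ih k (by omega))

end

theorem sF_le_pow (F : ℕ → ℕ)
    (hF0 : F 0 = 1) (hF1 : F 1 = 2) (hF : ∀ n, F (n + 2) = F (n + 1) + F n)
    (sF : ℕ → ℕ) (hsF0 : sF 0 = 1) (hsF1 : sF 1 = 2)
    (hrec1 : ∀ ℓ, 1 ≤ ℓ → ∀ r, r < F (ℓ - 2) →
      sF (F ℓ + r) = sF (F (ℓ - 1) + r) + sF r)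
    (hrec2 : ∀ ℓ, 1 ≤ ℓ → ∀ r, F (ℓ - 2) ≤ r → r < F (ℓ - 1) →
      sF (F ℓ + r) = 2 * sF r) :
    ∀ ℓ, 1 ≤ ℓ → ∀ r, r < F (ℓ - 1) → sF (F ℓ + r) ≤ 2 ^ (ℓ + 1) := by
  intro ℓ _ r hr
  apply sF_le_two_pow_of_lt hF0 hF1 hF hsF0 hsF1 hrec1 hrec2
  have := add_sub_one_le_succ hF0 hF1 hF ℓ
  omega
end

section
/- For all n ≥ 0, A_F(F(n)-1) = B(n), where A_F(n) = Σ_{j=0}^{n} s_F(j) and B satisfies B(0)=1, B(1)=3, B(2)=6 and B(n+3) = 2B(n+2) + B(n+1) - B(n). -/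
/-! The block sums `S n = ∑_{j < F n} s_F j` satisfy `S (n+3) = 2 S (n+2) + S (n+1) - S n`:
split `[F (n+2), F (n+3))` at `F (n+2) + F n`. On the first piece the first recursion gives
`(S (n+2) - S (n+1)) + S n`, on the second the doubling rule gives `2 (S (n+1) - S n)`.
Since `S` and `B` share the initial values `1, 3, 6`, they agree. -/

open Finset

theorem monotone_of_add_two_eq {F : ℕ → ℕ} (h01 : F 0 ≤ F 1)
    (hF : ∀ n, F (n + 2) = F (n + 1) + F n) : Monotone F := by
  refine monotone_nat_of_le_succ fun n => ?_
  cases n with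
  | zero => exact h01
  | succ n => rw [hF]; exact Nat.le_add_right _ _

theorem sum_range_add_three_add {F s : ℕ → ℕ} {m : ℕ}
    (hF2 : F (m + 2) = F (m + 1) + F m) (hF3 : F (m + 3) = F (m + 2) + F (m + 1))
    (hmono : F m ≤ F (m + 1))
    (hrec1 : ∀ r < F m, s (F (m + 2) + r) = s (F (m + 1) + r) + s r)
    (hrec2 : ∀ r, F m ≤ r → r < F (m + 1) → s (F (m + 2) + r) = 2 * s r) :
    ∑ j ∈ range (F (m + 3)), s j + ∑ j ∈ range (F m), s j =
      2 * ∑ j ∈ range (F (m + 2)), s j + ∑ j ∈ range (F (m + 1)), s j := by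
  have top : ∑ j ∈ range (F (m + 3)), s j = ∑ j ∈ range (F (m + 2)), s j +
      (∑ r ∈ range (F m), s (F (m + 2) + r) + ∑ r ∈ Ico (F m) (F (m + 1)), s (F (m + 2) + r)) := by
    rw [hF3, sum_range_add, sum_range_add_sum_Ico _ hmono]
  have low : ∑ r ∈ range (F m), s (F (m + 2) + r) =
      ∑ r ∈ range (F m), s (F (m + 1) + r) + ∑ j ∈ range (F m), s j := by
    rw [← sum_add_distrib]
    exact sum_congr rfl fun r hr => hrec1 r (mem_range.mp hr)
  have high : ∑ r ∈ Ico (F m) (F (m + 1)), s (F (m + 2) + r) =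
      2 * ∑ r ∈ Ico (F m) (F (m + 1)), s r := by
    rw [mul_sum]
    exact sum_congr rfl fun r hr => hrec2 r (mem_Ico.mp hr).1 (mem_Ico.mp hr).2
  have split2 : ∑ j ∈ range (F (m + 2)), s j =
      ∑ j ∈ range (F (m + 1)), s j + ∑ r ∈ range (F m), s (F (m + 1) + r) := by
    rw [hF2, sum_range_add]
  have split1 : ∑ j ∈ range (F (m + 1)), s j =
      ∑ j ∈ range (F m), s j + ∑ r ∈ Ico (F m) (F (m + 1)), s r :=
    (sum_range_add_sum_Ico _ hmono).symm
  omega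

theorem eq_of_add_three_eq {α : Type*} (g : α → α → α → α) {u v : ℕ → α}
    (hu : ∀ n, u (n + 3) = g (u n) (u (n + 1)) (u (n + 2)))
    (hv : ∀ n, v (n + 3) = g (v n) (v (n + 1)) (v (n + 2)))
    (h0 : u 0 = v 0) (h1 : u 1 = v 1) (h2 : u 2 = v 2) : ∀ n, u n = v n
  | 0 => h0
  | 1 => h1
  | 2 => h2
  | n + 3 => by
    rw [hu, hv, eq_of_add_three_eq g hu hv h0 h1 h2 n, eq_of_add_three_eq g hu hv h0 h1 h2 (n + 1),
      eq_of_add_three_eq g hu hv h0 h1 h2 (n + 2)]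

theorem AF_pred_F_eq_B (F : ℕ → ℕ)
    (hF0 : F 0 = 1) (hF1 : F 1 = 2) (hF : ∀ n, F (n + 2) = F (n + 1) + F n)
    (sF : ℕ → ℕ) (hsF0 : sF 0 = 1) (hsF1 : sF 1 = 2)
    (hrec1 : ∀ ℓ, 1 ≤ ℓ → ∀ r, r < F (ℓ - 2) →
      sF (F ℓ + r) = sF (F (ℓ - 1) + r) + sF r)
    (hrec2 : ∀ ℓ, 1 ≤ ℓ → ∀ r, F (ℓ - 2) ≤ r → r < F (ℓ - 1) →
      sF (F ℓ + r) = 2 * sF r)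
    (AF : ℕ → ℕ) (hAF : ∀ n, AF n = ∑ j ∈ Finset.range (n + 1), sF j)
    (B : ℕ → ℤ) (hB0 : B 0 = 1) (hB1 : B 1 = 3) (hB2 : B 2 = 6)
    (hBrec : ∀ n, B (n + 3) = 2 * B (n + 2) + B (n + 1) - B n) :
    ∀ n, (AF (F n - 1) : ℤ) = B n := by
  have hmono : Monotone F := monotone_of_add_two_eq (by omega) hF
  have hsF2 : sF 2 = 3 := by
    have h := hrec1 1 le_rfl 0 (by simp [hF0])
    simp only [hF0, hF1, Nat.sub_self, add_zero] at h
    omega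
  have hF2 : F 2 = 3 := by rw [hF, hF0, hF1]
  have hS : ∀ n, ((∑ j ∈ range (F n), sF j : ℕ) : ℤ) = B n := by
    refine eq_of_add_three_eq (fun a b c => 2 * c + b - a) (fun m => ?_) hBrec
      (by simp [hF0, hsF0, hB0]) (by simp [hF1, sum_range_succ, hsF0, hsF1, hB1])
      (by simp [hF2, sum_range_succ, hsF0, hsF1, hsF2, hB2])
    have h := sum_range_add_three_add (hF m) (hF (m + 1)) (hmono m.le_succ)
      (hrec1 (m + 2) (by omega)) (hrec2 (m + 2) (by omega))
    omega
  intro n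
  rw [hAF, Nat.sub_add_cancel (hF0 ▸ hmono (Nat.zero_le n)), hS]
end

section
/- For all ℓ ≥ 2 and all r with 0 ≤ r < F(ℓ-2), A_F(F(ℓ)+r) = B(ℓ) - B(ℓ-1) + A_F(F(ℓ-1)+r) + A_F(r). -/
/-!
Write `S k = ∑ j < F k, s_F j`. On the block `[F (k+2), F (k+3))` the first branch of the
recursion contributes `(S (k+2) - S (k+1)) + S k` and the second `2 (S (k+1) - S k)`, so `S`
satisfies the recurrence of `B`, with the same initial values `1, 3, 6`; hence `S = B`. The
identity then follows by summing the first branch of the recursion over `[0, r]`.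
-/

open Finset

section ShiftedSums

variable {s : ℕ → ℕ} {a b : ℕ}

theorem sum_range_shift_eq_sum_add_sum (h : ∀ i < a, s (b + a + i) = s (b + i) + s i) {r : ℕ}
    (hr : r ≤ a) :
    ∑ i ∈ range r, s (b + a + i) = ∑ i ∈ range r, s (b + i) + ∑ i ∈ range r, s i := by
  rw [← sum_add_distrib]
  exact sum_congr rfl fun i hi => h i (by rw [mem_range] at hi; omega)

theorem sum_range_add_add_add (h : ∀ i < a, s (b + a + i) = s (b + i) + s i) {r : ℕ}
    (hr : r ≤ a) :
    ∑ j ∈ range (b + a + r), s j + ∑ j ∈ range b, s j =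
      ∑ j ∈ range (b + a), s j + ∑ j ∈ range (b + r), s j + ∑ j ∈ range r, s j := by
  rw [sum_range_add s (b + a) r, sum_range_add s b r, sum_range_shift_eq_sum_add_sum h hr]
  ring

theorem sum_range_add_add_self (hab : a ≤ b)
    (h₁ : ∀ i < a, s (b + a + i) = s (b + i) + s i)
    (h₂ : ∀ i, a ≤ i → i < b → s (b + a + i) = 2 * s i) :
    ∑ j ∈ range (b + a + b), s j + ∑ j ∈ range a, s j =
      2 * ∑ j ∈ range (b + a), s j + ∑ j ∈ range b, s j := by
  have hhigh : ∑ i ∈ Ico a b, s (b + a + i) = 2 * ∑ i ∈ Ico a b, s i := by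
    rw [mul_sum]
    exact sum_congr rfl fun i hi => by rw [mem_Ico] at hi; exact h₂ i hi.1 hi.2
  rw [sum_range_add s (b + a) b, ← sum_range_add_sum_Ico (fun i => s (b + a + i)) hab,
    sum_range_shift_eq_sum_add_sum h₁ le_rfl, hhigh, sum_range_add s b a,
    ← sum_range_add_sum_Ico s hab]
  ring

end ShiftedSums

theorem eq_of_rec_three {α : Type*} {u v : ℕ → α} (g : α → α → α → α)
    (hu : ∀ n, u (n + 3) = g (u n) (u (n + 1)) (u (n + 2)))
    (hv : ∀ n, v (n + 3) = g (v n) (v (n + 1)) (v (n + 2)))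
    (h₀ : u 0 = v 0) (h₁ : u 1 = v 1) (h₂ : u 2 = v 2) : u = v := by
  have key : ∀ n, u n = v n ∧ u (n + 1) = v (n + 1) ∧ u (n + 2) = v (n + 2) := by
    intro n
    induction n with
    | zero => exact ⟨h₀, h₁, h₂⟩
    | succ n ih => exact ⟨ih.2.1, ih.2.2, by rw [hu, hv, ih.1, ih.2.1, ih.2.2]⟩
  exact funext fun n => (key n).1

theorem AF_rec_first (F : ℕ → ℕ)
    (hF0 : F 0 = 1) (hF1 : F 1 = 2) (hF : ∀ n, F (n + 2) = F (n + 1) + F n)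
    (sF : ℕ → ℕ) (hsF0 : sF 0 = 1) (hsF1 : sF 1 = 2)
    (hrec1 : ∀ ℓ, 1 ≤ ℓ → ∀ r, r < F (ℓ - 2) →
      sF (F ℓ + r) = sF (F (ℓ - 1) + r) + sF r)
    (hrec2 : ∀ ℓ, 1 ≤ ℓ → ∀ r, F (ℓ - 2) ≤ r → r < F (ℓ - 1) →
      sF (F ℓ + r) = 2 * sF r)
    (AF : ℕ → ℕ) (hAF : ∀ n, AF n = ∑ j ∈ Finset.range (n + 1), sF j)
    (B : ℕ → ℤ) (hB0 : B 0 = 1) (hB1 : B 1 = 3) (hB2 : B 2 = 6)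
    (hBrec : ∀ n, B (n + 3) = 2 * B (n + 2) + B (n + 1) - B n) :
    ∀ ℓ, 2 ≤ ℓ → ∀ r, r < F (ℓ - 2) →
      (AF (F ℓ + r) : ℤ) = B ℓ - B (ℓ - 1) + AF (F (ℓ - 1) + r) + AF r := by
  have h₁ : ∀ m, ∀ i < F m, sF (F (m + 1) + F m + i) = sF (F (m + 1) + i) + sF i :=
    fun m i hi => by simpa [hF] using hrec1 (m + 2) (by omega) i (by simpa using hi)
  have h₂ : ∀ m i, F m ≤ i → i < F (m + 1) → sF (F (m + 1) + F m + i) = 2 * sF i :=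
    fun m i hi hi' => by simpa [hF] using hrec2 (m + 2) (by omega) i (by simpa) (by simpa)
  have hmono : ∀ m, F m ≤ F (m + 1)
    | 0 => by rw [hF0, hF1]; omega
    | m + 1 => by rw [hF m]; omega
  have hsF2 : sF 2 = 3 := by simpa [hF0, hF1, hsF0, hsF1] using hrec1 1 le_rfl 0 (by simp [hF0])
  set S : ℕ → ℕ := fun k => ∑ j ∈ range (F k), sF j
  have hSB : (fun k => (S k : ℤ)) = B := by
    refine eq_of_rec_three (fun x y z => 2 * z + y - x) (fun n => ?_) hBrec ?_ ?_ ?_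
    · have := sum_range_add_add_self (hmono n) (h₁ n) (h₂ n)
      simp only [S, hF (n + 1), hF n] at this ⊢
      omega
    all_goals simp [S, hF, hF0, hF1, hsF0, hsF1, hsF2, sum_range_succ, hB0, hB1, hB2]
  intro ℓ hℓ r hr
  obtain ⟨m, rfl⟩ : ∃ m, ℓ = m + 2 := ⟨ℓ - 2, by omega⟩
  have hsplit := sum_range_add_add_add (h₁ m) (r := r + 1) (by simpa using hr)
  have hS : ∀ k, ((∑ j ∈ range (F k), sF j : ℕ) : ℤ) = B k := congr_fun hSB
  simp only [hAF, show m + 2 - 1 = m + 1 by omega, hF, ← hS, add_assoc] at hsplit ⊢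
  push_cast at hsplit ⊢
  linarith
end

section
/- For all ℓ ≥ 2 and all r with F(ℓ-2) ≤ r < F(ℓ-1), A_F(F(ℓ)+r) = 2B(ℓ) - B(ℓ-1) - B(ℓ-2) + 2·A_F(r). -/
/-!
With `S n = ∑ j < n, sF j`, split `[F ℓ, F ℓ + r]` at `F ℓ + F (ℓ - 2)`: below it
`sF (F ℓ + k) = sF (F (ℓ - 1) + k) + sF k`, above it `sF (F ℓ + k) = 2 * sF k`. Summing and using
`F ℓ = F (ℓ - 1) + F (ℓ - 2)` gives
`AF (F ℓ + r) = 2 S (F ℓ) - S (F (ℓ - 1)) - S (F (ℓ - 2)) + 2 AF r`.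
For `r = F (ℓ - 1) - 1` the left side is `S (F (ℓ + 1))`, so `n ↦ S (F n)` satisfies the
recurrence of `B`; it also has the same initial values, hence `S (F n) = B n`.
-/

open Finset

theorem sum_range_add_add_of_block_rec {M : Type*} [AddCommMonoid M] (s : ℕ → M)
    {a b c r : ℕ} (hc : c = b + a) (har : a ≤ r) (hrb : r < b)
    (hlow : ∀ k < a, s (c + k) = s (b + k) + s k)
    (hhigh : ∀ k, a ≤ k → k < b → s (c + k) = 2 • s k) :
    ∑ j ∈ range (c + r + 1), s j + ∑ j ∈ range b, s j + ∑ j ∈ range a, s j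
      = 2 • ∑ j ∈ range c, s j + 2 • ∑ j ∈ range (r + 1), s j := by
  have split_top : ∑ j ∈ range (c + r + 1), s j = ∑ j ∈ range c, s j
      + (∑ k ∈ range a, s (c + k) + ∑ k ∈ Ico a (r + 1), s (c + k)) := by
    rw [add_assoc, sum_range_add, sum_range_add_sum_Ico _ (by omega)]
  have split_c : ∑ j ∈ range c, s j = ∑ j ∈ range b, s j + ∑ k ∈ range a, s (b + k) := by
    rw [hc, sum_range_add]
  have split_r : ∑ j ∈ range (r + 1), s j = ∑ j ∈ range a, s j + ∑ k ∈ Ico a (r + 1), s k :=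
    (sum_range_add_sum_Ico _ (by omega)).symm
  have low : ∑ k ∈ range a, s (c + k) = ∑ k ∈ range a, s (b + k) + ∑ k ∈ range a, s k := by
    rw [← sum_add_distrib]
    exact sum_congr rfl fun k hk => hlow k (mem_range.mp hk)
  have high : ∑ k ∈ Ico a (r + 1), s (c + k) = 2 • ∑ k ∈ Ico a (r + 1), s k := by
    rw [smul_sum]
    exact sum_congr rfl fun k hk => hhigh k (mem_Ico.mp hk).1 (by grind)
  rw [split_top, low, high, split_r, split_c]
  abel

theorem lt_succ_of_add_rec {F : ℕ → ℕ} (h0 : 0 < F 0) (h01 : F 0 < F 1)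
    (hF : ∀ n, F (n + 2) = F (n + 1) + F n) (n : ℕ) : F n < F (n + 1) := by
  suffices 0 < F n ∧ F n < F (n + 1) from this.2
  induction n with
  | zero => exact ⟨h0, h01⟩
  | succ n ih => exact ⟨by omega, by rw [hF]; omega⟩

theorem eq_of_rec_three_s9 {R : Type*} [CommRing R] {u v : ℕ → R}
    (h0 : u 0 = v 0) (h1 : u 1 = v 1) (h2 : u 2 = v 2)
    (hu : ∀ n, u (n + 3) = 2 * u (n + 2) + u (n + 1) - u n)
    (hv : ∀ n, v (n + 3) = 2 * v (n + 2) + v (n + 1) - v n) (n : ℕ) : u n = v n := by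
  induction n using Nat.strong_induction_on with
  | _ n ih =>
    match n with
    | 0 => exact h0
    | 1 => exact h1
    | 2 => exact h2
    | k + 3 => rw [hu, hv, ih k (by omega), ih (k + 1) (by omega), ih (k + 2) (by omega)]

theorem AF_rec_second (F : ℕ → ℕ)
    (hF0 : F 0 = 1) (hF1 : F 1 = 2) (hF : ∀ n, F (n + 2) = F (n + 1) + F n)
    (sF : ℕ → ℕ) (hsF0 : sF 0 = 1) (hsF1 : sF 1 = 2)
    (hrec1 : ∀ ℓ, 1 ≤ ℓ → ∀ r, r < F (ℓ - 2) →
      sF (F ℓ + r) = sF (F (ℓ - 1) + r) + sF r)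
    (hrec2 : ∀ ℓ, 1 ≤ ℓ → ∀ r, F (ℓ - 2) ≤ r → r < F (ℓ - 1) →
      sF (F ℓ + r) = 2 * sF r)
    (AF : ℕ → ℕ) (hAF : ∀ n, AF n = ∑ j ∈ Finset.range (n + 1), sF j)
    (B : ℕ → ℤ) (hB0 : B 0 = 1) (hB1 : B 1 = 3) (hB2 : B 2 = 6)
    (hBrec : ∀ n, B (n + 3) = 2 * B (n + 2) + B (n + 1) - B n) :
    ∀ ℓ, 2 ≤ ℓ → ∀ r, F (ℓ - 2) ≤ r → r < F (ℓ - 1) →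
      (AF (F ℓ + r) : ℤ) = 2 * B ℓ - B (ℓ - 1) - B (ℓ - 2) + 2 * AF r := by
  have block : ∀ m r, F m ≤ r → r < F (m + 1) →
      ∑ j ∈ range (F (m + 2) + r + 1), sF j + ∑ j ∈ range (F (m + 1)), sF j
        + ∑ j ∈ range (F m), sF j
      = 2 * ∑ j ∈ range (F (m + 2)), sF j + 2 * ∑ j ∈ range (r + 1), sF j := fun m r h1 h2 =>
    sum_range_add_add_of_block_rec sF (hF m) h1 h2 (hrec1 (m + 2) (by omega))
      (hrec2 (m + 2) (by omega))
  -- at `ℓ = 1` the truncated `ℓ - 2` is `0`, so `hrec1` reads `sF 2 = sF 1 + sF 0`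
  have hsF2 : sF 2 = 3 := by
    simpa [hF0, hF1, hsF0, hsF1] using hrec1 1 le_rfl 0 (by simp [hF0])
  have hF_lt := lt_succ_of_add_rec (by omega) (by omega) hF
  have hS : ∀ n, ((∑ j ∈ range (F n), sF j : ℕ) : ℤ) = B n := by
    refine eq_of_rec_three_s9 ?_ ?_ ?_ (fun m => ?_) hBrec
    · simp [hF0, hsF0, hB0]
    · simp [hF1, sum_range_succ, hsF0, hsF1, hB1]
    · simp [hF, hF0, hF1, sum_range_succ, hsF0, hsF1, hsF2, hB2]
    · have hm := hF_lt m
      have hm3 : F (m + 3) = F (m + 2) + F (m + 1) := hF (m + 1)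
      have h := block m (F (m + 1) - 1) (by omega) (by omega)
      rw [Nat.sub_add_cancel (by omega),
        show F (m + 2) + (F (m + 1) - 1) + 1 = F (m + 3) by omega] at h
      push_cast at h ⊢
      linarith
  intro ℓ hℓ r h1 h2
  obtain ⟨m, rfl⟩ : ∃ m, ℓ = m + 2 := ⟨ℓ - 2, by omega⟩
  simp only [Nat.add_sub_cancel, show m + 2 - 1 = m + 1 from rfl] at h1 h2 ⊢
  have h := block m r h1 h2
  rw [hAF, hAF, ← hS, ← hS, ← hS]
  push_cast at h ⊢
  linarith
end

section
/- Let β be the root of maximal modulus of X³ - 2X² - X + 1, and let g be defined by g(0)=2, g(1)=-1, g(2)=3 and g(n)=2g(n-2) for n ≥ 3. Then the series Σ_{i=0}^{∞} g(i)/β^i converges and equals β. -/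
/-!
Shifting by one index, `u n = g (n + 1)` satisfies `u (n + 2) = 2 u n` for all `n`, so the even and
odd parts of `∑ u n xⁿ` are geometric series in `2x²`, and `∑ u n xⁿ = (u 0 + u 1 x) / (1 - 2x²)`.
This converges at `x = β⁻¹` because `β ≥ 2` (the cubic changes sign on `[2, 3]`), and the value
`2 + β⁻¹ (3β⁻¹ - 1) / (1 - 2β⁻²)` equals `β` exactly because `β³ - 2β² - β + 1 = 0`.
-/

lemma apply_add_two_mul_eq_pow_mul {R : Type*} [CommMonoid R] {u : ℕ → R} {c : R}
    (hu : ∀ n, u (n + 2) = c * u n) (n k : ℕ) : u (n + 2 * k) = c ^ k * u n := by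
  induction k with
  | zero => simp
  | succ k ih => rw [Nat.mul_succ, ← add_assoc, hu, ih, pow_succ', mul_assoc]

lemma hasSum_mul_pow_of_add_two_eq_mul {K : Type*} [NormedField K] {u : ℕ → K} {c x : K}
    (hu : ∀ n, u (n + 2) = c * u n) (hx : ‖c * x ^ 2‖ < 1) :
    HasSum (fun n => u n * x ^ n) ((u 0 + u 1 * x) / (1 - c * x ^ 2)) := by
  have hgeom := hasSum_geometric_of_norm_lt_one hx
  have heven : HasSum (fun k => u (2 * k) * x ^ (2 * k)) (u 0 * (1 - c * x ^ 2)⁻¹) := by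
    refine (hgeom.mul_left (u 0)).congr_fun fun k => ?_
    rw [← zero_add (2 * k), apply_add_two_mul_eq_pow_mul hu, zero_add, mul_pow, pow_mul]
    ring
  have hodd : HasSum (fun k => u (2 * k + 1) * x ^ (2 * k + 1))
      (u 1 * x * (1 - c * x ^ 2)⁻¹) := by
    refine (hgeom.mul_left (u 1 * x)).congr_fun fun k => ?_
    rw [add_comm (2 * k), apply_add_two_mul_eq_pow_mul hu, add_comm, pow_succ, mul_pow, pow_mul]
    ring
  rw [add_div, div_eq_mul_inv, div_eq_mul_inv]
  exact HasSum.even_add_odd (f := fun n => u n * x ^ n) heven hodd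

lemma two_le_of_forall_root_le {β : ℝ} (hβmax : ∀ x : ℝ, x ^ 3 - 2 * x ^ 2 - x + 1 = 0 → x ≤ β) :
    2 ≤ β := by
  obtain ⟨x, hx, hroot⟩ : ∃ x ∈ Set.Icc (2 : ℝ) 3, x ^ 3 - 2 * x ^ 2 - x + 1 = 0 :=
    intermediate_value_Icc (by norm_num) (by fun_prop) (by norm_num)
  exact hx.1.trans (hβmax x hroot)

theorem g_series_eq_beta (β : ℝ)
    (hβroot : β ^ 3 - 2 * β ^ 2 - β + 1 = 0)
    (hβmax : ∀ x : ℝ, x ^ 3 - 2 * x ^ 2 - x + 1 = 0 → x ≤ β)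
    (g : ℕ → ℤ)
    (hg0 : g 0 = 2) (hg1 : g 1 = -1) (hg2 : g 2 = 3)
    (hgrec : ∀ n, 3 ≤ n → g n = 2 * g (n - 2)) :
    HasSum (fun i : ℕ => (g i : ℝ) / β ^ i) β := by
  have hβ : 2 ≤ β := two_le_of_forall_root_le hβmax
  have hshift : ∀ n, (g (n + 2 + 1) : ℝ) = 2 * g (n + 1) := fun n => by
    exact_mod_cast hgrec (n + 3) (by omega)
  have hratio : ‖2 * β⁻¹ ^ 2‖ < 1 := by
    rw [Real.norm_eq_abs, abs_of_pos (by positivity), inv_pow, ← div_eq_mul_inv,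
      div_lt_one (by positivity)]
    nlinarith
  have htail := (hasSum_mul_pow_of_add_two_eq_mul
    (u := fun n => (g (n + 1) : ℝ)) hshift hratio).mul_left β⁻¹
  have hβ2 : β ^ 2 - 2 ≠ 0 := by nlinarith
  have hvalue : β - ∑ i ∈ Finset.range 1, (g i : ℝ) / β ^ i =
      β⁻¹ * ((g (0 + 1) + g (1 + 1) * β⁻¹) / (1 - 2 * β⁻¹ ^ 2)) := by
    simp only [Finset.sum_range_one, zero_add, hg0, hg1, hg2, pow_zero, div_one]
    push_cast
    field_simp
    linear_combination hβroot
  rw [← hasSum_nat_add_iff' 1, hvalue]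
  refine htail.congr_fun fun n => ?_
  rw [div_eq_mul_inv, ← inv_pow, pow_succ]
  ring
end
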